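/- arXiv:1411.2281 — 4 statements merged into one kernel-verified Lean document; each statement's English description precedes it below -/
import Mathlib

section
/- For all real numbers κ ≥ 1 and K ≥ 1 there exists M > 0 with the following property. Let X be any metric space, let γ : ℝ → X be a κ-coarse geodesic, and let Π : X → X be a κ-contracting projection onto γ. Then for all real numbers a ≤ b, every continuous K-quasi-geodesic σ : [a, b] → X with σ(a) ∈ γ(ℝ) and σ(b) ∈ γ(ℝ) satisfies infDist(σ(s), γ(ℝ)) ≤ M for every s ∈ [a, b]. (This is the abstract content of the paper's Lemma 3.6: quasi-geodesics with endpoints on a contracting coarse geodesic stay uniformly close to it, with the bound depending only on κ and K.) -/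
/-- A `κ`-coarse geodesic in a metric space: a (not necessarily continuous) map
`γ : ℝ → X` with `|s − t| − κ ≤ d(γ s, γ t) ≤ |s − t| + κ` for all `s, t`. -/
def IsCoarseGeodesic {X : Type*} [MetricSpace X] (κ : ℝ) (γ : ℝ → X) : Prop :=
  ∀ s t : ℝ, |s - t| - κ ≤ dist (γ s) (γ t) ∧ dist (γ s) (γ t) ≤ |s - t| + κ

/-- A `κ`-contracting projection onto `γ`: the image of `Pr` lies in `γ(ℝ)`,
far-apart projections force the contraction inequality, and near-closest points
of `γ(ℝ)` are `κ`-close to the projection. -/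
def IsContractingProjection {X : Type*} [MetricSpace X] (κ : ℝ) (γ : ℝ → X)
    (Pr : X → X) : Prop :=
  Set.range Pr ⊆ Set.range γ ∧
  (∀ x y : X, κ ≤ dist (Pr x) (Pr y) →
    dist x (Pr x) + dist (Pr x) (Pr y) + dist (Pr y) y - κ ≤ dist x y) ∧
  (∀ (x : X) (s : ℝ), dist x (γ s) ≤ Metric.infDist x (Set.range γ) + 1 →
    dist (γ s) (Pr x) ≤ κ)

/-- A `K`-quasi-geodesic defined on `[a, b]`. -/
def IsQuasiGeodesicOn {X : Type*} [MetricSpace X] (K a b : ℝ) (σ : ℝ → X) : Prop :=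
  ∀ s ∈ Set.Icc a b, ∀ t ∈ Set.Icc a b,
    |s - t| / K - K ≤ dist (σ s) (σ t) ∧ dist (σ s) (σ t) ≤ K * |s - t| + K

/-- Points whose `infDist` to `γ(ℝ)` is at least `C = K²κ + K` throughout a short time
window have slowly moving projections: the sweep lemma. -/
lemma sweep_lemma {X : Type} [MetricSpace X] (κ K : ℝ) (hκ : 1 ≤ κ) (hK : 1 ≤ K)
    (γ : ℝ → X) (Pr : X → X) (hcon : IsContractingProjection κ γ Pr)
    (a b : ℝ) (σ : ℝ → X) (hqg : IsQuasiGeodesicOn K a b σ) :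
    ∀ n : ℕ, ∀ u v : ℝ, u ∈ Set.Icc a b → v ∈ Set.Icc a b → u ≤ v →
      v - u ≤ n * (2 * K * κ) →
      (∀ t ∈ Set.Icc u v, K ^ 2 * κ + K ≤ Metric.infDist (σ t) (Set.range γ)) →
      dist (Pr (σ u)) (Pr (σ v)) ≤ n * κ := by
  intro n
  induction n with
  | zero =>
    intro u v hu hv huv hlen _
    have : u = v := by push_cast at hlen; linarith
    simp [this]
  | succ n ih =>
    intro u v hu hv huv hlen hfar
    set w : ℝ := max u (v - 2 * K * κ) with hw
    have hκ0 : (0:ℝ) < κ := by linarith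
    have hK0 : (0:ℝ) < K := by linarith
    have huw : u ≤ w := le_max_left _ _
    have hwv : w ≤ v := max_le huv (by nlinarith)
    have hwab : w ∈ Set.Icc a b := ⟨le_trans hu.1 huw, le_trans hwv hv.2⟩
    have hwu : w - u ≤ n * (2 * K * κ) := by
      rcases le_or_gt (v - 2 * K * κ) u with h | h
      · have : w = u := max_eq_left h
        rw [this]
        have : (0:ℝ) ≤ (n:ℝ) * (2 * K * κ) := by positivity
        linarith
      · have : w = v - 2 * K * κ := max_eq_right h.le
        rw [this]; push_cast at hlen ⊢; linarith
    have hvw : v - w ≤ 2 * K * κ := by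
      have : v - 2 * K * κ ≤ w := le_max_right _ _
      linarith
    have h1 : dist (Pr (σ u)) (Pr (σ w)) ≤ n * κ :=
      ih u w hu hwab huw hwu (fun t ht => hfar t ⟨ht.1, le_trans ht.2 hwv⟩)
    have h2 : dist (Pr (σ w)) (Pr (σ v)) ≤ κ := by
      by_contra hlt
      push_neg at hlt
      have hdd : dist (σ w) (Pr (σ w)) + dist (Pr (σ w)) (Pr (σ v)) +
          dist (Pr (σ v)) (σ v) - κ ≤ dist (σ w) (σ v) :=
        hcon.2.1 _ _ hlt.le
      have hfw : K ^ 2 * κ + K ≤ Metric.infDist (σ w) (Set.range γ) :=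
        hfar w ⟨huw, hwv⟩
      have hfv : K ^ 2 * κ + K ≤ Metric.infDist (σ v) (Set.range γ) :=
        hfar v ⟨le_trans huw hwv, le_refl v⟩
      have hpw : Metric.infDist (σ w) (Set.range γ) ≤ dist (σ w) (Pr (σ w)) :=
        Metric.infDist_le_dist_of_mem (hcon.1 ⟨σ w, rfl⟩)
      have hpv : Metric.infDist (σ v) (Set.range γ) ≤ dist (Pr (σ v)) (σ v) := by
        rw [dist_comm]; exact Metric.infDist_le_dist_of_mem (hcon.1 ⟨σ v, rfl⟩)
      have hup : dist (σ w) (σ v) ≤ K * |w - v| + K := (hqg w hwab v hv).2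
      have habs : |w - v| ≤ 2 * K * κ := by
        rw [abs_sub_comm, abs_of_nonneg (by linarith)]; exact hvw
      nlinarith
    calc dist (Pr (σ u)) (Pr (σ v)) ≤ dist (Pr (σ u)) (Pr (σ w)) + dist (Pr (σ w)) (Pr (σ v)) :=
          dist_triangle _ _ _
      _ ≤ n * κ + κ := add_le_add h1 h2
      _ = (n + 1 : ℕ) * κ := by push_cast; ring

/-- Quasi-geodesics with endpoints on a contracting coarse geodesic stay uniformly
close to it, with a bound depending only on `κ` and `K`. -/
theorem quasiGeodesic_near_contracting_coarse_geodesic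
    (κ K : ℝ) (hκ : 1 ≤ κ) (hK : 1 ≤ K) :
    ∃ M > 0, ∀ (X : Type) [MetricSpace X] (γ : ℝ → X) (Pr : X → X),
      IsCoarseGeodesic κ γ →
      IsContractingProjection κ γ Pr →
      ∀ a b : ℝ, a ≤ b → ∀ σ : ℝ → X,
        ContinuousOn σ (Set.Icc a b) →
        IsQuasiGeodesicOn K a b σ →
        σ a ∈ Set.range γ → σ b ∈ Set.range γ →
        ∀ s ∈ Set.Icc a b, Metric.infDist (σ s) (Set.range γ) ≤ M := by
  have hκ0 : (0:ℝ) < κ := by linarith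
  have hK0 : (0:ℝ) < K := by linarith
  set C : ℝ := K ^ 2 * κ + K with hC
  have hC0 : 0 < C := by positivity
  set L₀ : ℝ := 2 * K * (2 * C + 3 * κ + K + 2) with hL₀
  have hL₀0 : 0 < L₀ := by positivity
  refine ⟨C + K * L₀ + K, by positivity, ?_⟩
  intro X _ γ Pr _ hcon a b hab σ hcont hqg ha hb s hs
  set S : Set X := Set.range γ with hS
  set g : ℝ → ℝ := fun t => Metric.infDist (σ t) S with hg
  -- trivial case
  rcases le_or_gt (g s) C with hgs | hgs
  · have : 0 ≤ K * L₀ + K := by positivity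
    simpa [g] using le_trans hgs (by linarith)
  -- continuity of g on [a,b]
  have hgcont : ContinuousOn g (Set.Icc a b) :=
    (Metric.continuous_infDist_pt S).comp_continuousOn hcont
  -- distance to projection bounds
  have hdistpr : ∀ x : X, dist x (Pr x) ≤ Metric.infDist x S + 1 + κ := by
    intro x
    have hne : S.Nonempty := ⟨γ 0, 0, rfl⟩
    have : Metric.infDist x S < Metric.infDist x S + 1 := by linarith
    obtain ⟨y, hy, hxy⟩ := (Metric.infDist_lt_iff hne).1 this
    obtain ⟨t, rfl⟩ := hy
    have := hcon.2.2 x t hxy.le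
    calc dist x (Pr x) ≤ dist x (γ t) + dist (γ t) (Pr x) := dist_triangle _ _ _
      _ ≤ Metric.infDist x S + 1 + κ := by linarith
  -- the sets where g ≤ C before and after s
  set T₁ : Set ℝ := Set.Icc a s ∩ g ⁻¹' Set.Iic C with hT₁
  set T₂ : Set ℝ := Set.Icc s b ∩ g ⁻¹' Set.Iic C with hT₂
  have hT₁closed : IsClosed T₁ :=
    (hgcont.mono (Set.Icc_subset_Icc_right hs.2)).preimage_isClosed_of_isClosed
      isClosed_Icc isClosed_Iic
  have hT₂closed : IsClosed T₂ :=
    (hgcont.mono (Set.Icc_subset_Icc_left hs.1)).preimage_isClosed_of_isClosed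
      isClosed_Icc isClosed_Iic
  have hga : g a ≤ C := by
    have : g a = 0 := Metric.infDist_zero_of_mem ha
    linarith
  have hgb : g b ≤ C := by
    have : g b = 0 := Metric.infDist_zero_of_mem hb
    linarith
  have hT₁ne : T₁.Nonempty := ⟨a, ⟨le_refl a, hs.1⟩, hga⟩
  have hT₂ne : T₂.Nonempty := ⟨b, ⟨hs.2, le_refl b⟩, hgb⟩
  have hT₁bdd : BddAbove T₁ := ⟨s, fun t ht => ht.1.2⟩
  have hT₂bdd : BddBelow T₂ := ⟨s, fun t ht => ht.1.1⟩
  set t₁ : ℝ := sSup T₁ with ht₁def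
  set t₂ : ℝ := sInf T₂ with ht₂def
  have ht₁mem : t₁ ∈ T₁ := hT₁closed.csSup_mem hT₁ne hT₁bdd
  have ht₂mem : t₂ ∈ T₂ := hT₂closed.csInf_mem hT₂ne hT₂bdd
  have ht₁s : t₁ < s := by
    rcases lt_or_eq_of_le ht₁mem.1.2 with h | h
    · exact h
    · exact absurd ht₁mem.2 (by rw [h]; exact not_le.2 hgs)
  have hst₂ : s < t₂ := by
    rcases lt_or_eq_of_le ht₂mem.1.1 with h | h
    · exact h
    · exact absurd ht₂mem.2 (by rw [← h]; exact not_le.2 hgs)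
  have ht₁ab : t₁ ∈ Set.Icc a b := ⟨ht₁mem.1.1, le_trans ht₁mem.1.2 hs.2⟩
  have ht₂ab : t₂ ∈ Set.Icc a b := ⟨le_trans hs.1 ht₂mem.1.1, ht₂mem.1.2⟩
  -- g > C strictly inside
  have hmid₁ : ∀ t ∈ Set.Ioc t₁ s, C < g t := by
    intro t ht
    by_contra hle
    push_neg at hle
    have : t ∈ T₁ := ⟨⟨le_trans ht₁mem.1.1 ht.1.le, ht.2⟩, hle⟩
    exact absurd (le_csSup hT₁bdd this) (not_le.2 ht.1)
  have hmid₂ : ∀ t ∈ Set.Ico s t₂, C < g t := by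
    intro t ht
    by_contra hle
    push_neg at hle
    have : t ∈ T₂ := ⟨⟨ht.1, le_trans ht.2.le ht₂mem.1.2⟩, hle⟩
    exact absurd (csInf_le hT₂bdd this) (not_le.2 ht.2)
  -- g ≥ C at the endpoints by continuity
  have hgt₁ : C ≤ g t₁ := by
    have hclos : t₁ ∈ closure (Set.Ioc t₁ s) := by
      rw [closure_Ioc ht₁s.ne]; exact ⟨le_refl _, ht₁s.le⟩
    have hnb : (nhdsWithin t₁ (Set.Ioc t₁ s)).NeBot :=
      mem_closure_iff_nhdsWithin_neBot.1 hclos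
    have hsub : Set.Ioc t₁ s ⊆ Set.Icc a b := fun t ht =>
      ⟨le_trans ht₁ab.1 ht.1.le, le_trans ht.2 hs.2⟩
    have htend : Filter.Tendsto g (nhdsWithin t₁ (Set.Ioc t₁ s)) (nhds (g t₁)) :=
      (hgcont t₁ ht₁ab).mono_left (nhdsWithin_mono _ hsub)
    exact ge_of_tendsto htend (Filter.eventually_of_mem self_mem_nhdsWithin
      (fun t ht => (hmid₁ t ht).le))
  have hgt₂ : C ≤ g t₂ := by
    have hclos : t₂ ∈ closure (Set.Ico s t₂) := by
      rw [closure_Ico hst₂.ne]; exact ⟨hst₂.le, le_refl _⟩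
    have hnb : (nhdsWithin t₂ (Set.Ico s t₂)).NeBot :=
      mem_closure_iff_nhdsWithin_neBot.1 hclos
    have hsub : Set.Ico s t₂ ⊆ Set.Icc a b := fun t ht =>
      ⟨le_trans hs.1 ht.1, le_trans ht.2.le ht₂ab.2⟩
    have htend : Filter.Tendsto g (nhdsWithin t₂ (Set.Ico s t₂)) (nhds (g t₂)) :=
      (hgcont t₂ ht₂ab).mono_left (nhdsWithin_mono _ hsub)
    exact ge_of_tendsto htend (Filter.eventually_of_mem self_mem_nhdsWithin
      (fun t ht => (hmid₂ t ht).le))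
  -- g ≥ C on all of [t₁, t₂]
  have hfar : ∀ t ∈ Set.Icc t₁ t₂, C ≤ g t := by
    intro t ht
    rcases eq_or_lt_of_le ht.1 with h | h
    · rw [← h]; exact hgt₁
    rcases eq_or_lt_of_le ht.2 with h2 | h2
    · rw [h2]; exact hgt₂
    rcases le_or_gt t s with hts | hts
    · exact (hmid₁ t ⟨h, hts⟩).le
    · exact (hmid₂ t ⟨hts.le, h2⟩).le
  set L : ℝ := t₂ - t₁ with hL
  have hL0 : 0 < L := by simp only [hL]; linarith
  -- sweep bound with n = ⌈L / (2Kκ)⌉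
  set n : ℕ := ⌈L / (2 * K * κ)⌉₊ with hn
  have hδ0 : (0:ℝ) < 2 * K * κ := by positivity
  have hnle : L ≤ n * (2 * K * κ) := by
    have := Nat.le_ceil (L / (2 * K * κ))
    calc L = L / (2 * K * κ) * (2 * K * κ) := by field_simp
      _ ≤ n * (2 * K * κ) := by
          apply mul_le_mul_of_nonneg_right this hδ0.le
  have hnub : (n : ℝ) ≤ L / (2 * K * κ) + 1 := by
    have h0 : 0 ≤ L / (2 * K * κ) := by positivity
    exact (Nat.ceil_lt_add_one h0).le
  have hsweep : dist (Pr (σ t₁)) (Pr (σ t₂)) ≤ n * κ :=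
    sweep_lemma κ K hκ hK γ Pr hcon a b σ hqg n t₁ t₂ ht₁ab ht₂ab (by linarith)
      (by simp only [hL] at hnle; linarith) (fun t ht => hfar t ht)
  -- endpoint projection distances
  have hd₁ : dist (σ t₁) (Pr (σ t₁)) ≤ C + 1 + κ := by
    have := hdistpr (σ t₁)
    have : Metric.infDist (σ t₁) S ≤ C := ht₁mem.2
    linarith [hdistpr (σ t₁)]
  have hd₂ : dist (σ t₂) (Pr (σ t₂)) ≤ C + 1 + κ := by
    have : Metric.infDist (σ t₂) S ≤ C := ht₂mem.2
    linarith [hdistpr (σ t₂)]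
  -- quasi-geodesic lower bound
  have hlow : L / K - K ≤ dist (σ t₁) (σ t₂) := by
    have := (hqg t₁ ht₁ab t₂ ht₂ab).1
    rwa [abs_sub_comm, abs_of_nonneg hL0.le] at this
  have hupper : dist (σ t₁) (σ t₂) ≤ (C + 1 + κ) + n * κ + (C + 1 + κ) := by
    calc dist (σ t₁) (σ t₂)
        ≤ dist (σ t₁) (Pr (σ t₁)) + dist (Pr (σ t₁)) (Pr (σ t₂)) + dist (Pr (σ t₂)) (σ t₂) :=
          dist_triangle4 _ _ _ _
      _ ≤ (C + 1 + κ) + n * κ + (C + 1 + κ) := by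
          rw [dist_comm (Pr (σ t₂))]; exact add_le_add (add_le_add hd₁ hsweep) hd₂
  -- combine to bound L
  have hnκ : (n : ℝ) * κ ≤ L / (2 * K) + κ := by
    have h1 : (n : ℝ) * κ ≤ (L / (2 * K * κ) + 1) * κ :=
      mul_le_mul_of_nonneg_right hnub hκ0.le
    have h2 : (L / (2 * K * κ) + 1) * κ = L / (2 * K) + κ := by
      field_simp
    linarith
  have hLbound : L ≤ L₀ := by
    have key : L / K - K ≤ 2 * (C + 1 + κ) + (L / (2 * K) + κ) := by linarith
    have hKK : L / K - L / (2 * K) = L / (2 * K) := by field_simp; ring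
    have : L / (2 * K) ≤ 2 * C + 3 * κ + K + 2 := by linarith
    calc L = 2 * K * (L / (2 * K)) := by field_simp
      _ ≤ 2 * K * (2 * C + 3 * κ + K + 2) := by
          apply mul_le_mul_of_nonneg_left this (by positivity)
      _ = L₀ := rfl
  -- conclude
  have hfinal : g s ≤ g t₁ + dist (σ s) (σ t₁) := Metric.infDist_le_infDist_add_dist
  have hds : dist (σ s) (σ t₁) ≤ K * L₀ + K := by
    have := (hqg s hs t₁ ht₁ab).2
    have habs : |s - t₁| ≤ L₀ := by
      rw [abs_of_nonneg (by linarith)]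
      have : s - t₁ ≤ L := by simp only [hL]; linarith
      linarith
    nlinarith
  have : g s ≤ C + (K * L₀ + K) := by
    have : g t₁ ≤ C := ht₁mem.2
    linarith
  simpa [g] using by linarith
end

section
/- For all real numbers κ ≥ 1 and K ≥ 1 there exists M > 0 with the following property. Let X be any metric space, let γ : ℝ → X be a κ-coarse geodesic, and let Π : X → X be a κ-contracting projection onto γ. Then for every natural number N and every map σ : {0, 1, …, N} → X such that σ(0) ∈ γ(ℝ), σ(N) ∈ γ(ℝ), d(σ(i), σ(i+1)) ≤ K for all 0 ≤ i < N, and |i − j|/K − K ≤ d(σ(i), σ(j)) for all 0 ≤ i, j ≤ N, one has infDist(σ(i), γ(ℝ)) ≤ M for every 0 ≤ i ≤ N. (Discrete-chain version of the paper's Lemma 3.6.) -/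
private lemma dist_proj_le {X : Type*} [MetricSpace X] {κ : ℝ} {γ : ℝ → X} {Pr : X → X}
    (hP : IsContractingProjection κ γ Pr) (x : X) :
    dist x (Pr x) ≤ Metric.infDist x (Set.range γ) + 1 + κ := by
  have hne : (Set.range γ).Nonempty := ⟨γ 0, 0, rfl⟩
  have h : Metric.infDist x (Set.range γ) < Metric.infDist x (Set.range γ) + 1 := by linarith
  obtain ⟨y, ⟨s, rfl⟩, hy⟩ := (Metric.infDist_lt_iff hne).1 h
  have h2 := hP.2.2 x s hy.le
  calc dist x (Pr x) ≤ dist x (γ s) + dist (γ s) (Pr x) := dist_triangle _ _ _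
  _ ≤ _ := by linarith

private lemma accum_lemma {X : Type*} [MetricSpace X] {κ : ℝ} (hκ : 0 ≤ κ) (p : ℕ → X)
    (L a b : ℕ) (hL : 0 < L)
    (h : ∀ j l, a < j → j ≤ l → l < b → l - j ≤ L → dist (p j) (p l) ≤ κ) :
    ∀ j, a < j → j < b → dist (p (a+1)) (p j) ≤ κ * (((j - (a+1)) / L : ℕ) + 1) := by
  intro j
  induction j using Nat.strong_induction_on with
  | _ j ih =>
    intro haj hjb
    by_cases hc : j - (a+1) ≤ L
    · have h1 := h (a+1) j (Nat.lt_succ_self a) haj hjb hc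
      have hq : (0:ℝ) ≤ (((j - (a+1)) / L : ℕ) : ℝ) := by positivity
      nlinarith
    · push_neg at hc
      have hjL : a < j - L := by omega
      have h1 := ih (j - L) (by omega) hjL (by omega)
      have h2 := h (j - L) j hjL (by omega) hjb (by omega)
      rw [show j - L - (a+1) = j - (a+1) - L from by omega] at h1
      rw [Nat.div_eq_sub_div hL (show L ≤ j - (a+1) from by omega)]
      have := dist_triangle (p (a+1)) (p (j - L)) (p j)
      push_cast
      push_cast at h1
      linarith

private lemma sum_steps {X : Type*} [MetricSpace X] {K : ℝ} (σ : ℕ → X) (N : ℕ)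
    (hstep : ∀ i : ℕ, i < N → dist (σ i) (σ (i + 1)) ≤ K) :
    ∀ j m : ℕ, j + m ≤ N → dist (σ j) (σ (j + m)) ≤ m * K := by
  intro j m
  induction m with
  | zero => simp
  | succ m ih =>
    intro hm
    have h1 := ih (by omega)
    have h2 := hstep (j + m) (by omega)
    have := dist_triangle (σ j) (σ (j + m)) (σ (j + m + 1))
    have : dist (σ j) (σ (j + (m+1))) ≤ m * K + K := by
      rw [show j + (m+1) = j + m + 1 by ring]; linarith
    push_cast
    linarith

set_option maxHeartbeats 1000000 in
/-- Discrete-chain version: a discrete quasi-geodesic chain with endpoints on a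
contracting coarse geodesic stays uniformly close to it, with a bound depending
only on `κ` and `K`. -/
theorem discrete_chain_near_contracting_coarse_geodesic
    (κ K : ℝ) (hκ : 1 ≤ κ) (hK : 1 ≤ K) :
    ∃ M > 0, ∀ (X : Type) [MetricSpace X] (γ : ℝ → X) (Pr : X → X),
      IsCoarseGeodesic κ γ →
      IsContractingProjection κ γ Pr →
      ∀ (N : ℕ) (σ : ℕ → X),
        σ 0 ∈ Set.range γ → σ N ∈ Set.range γ →
        (∀ i : ℕ, i < N → dist (σ i) (σ (i + 1)) ≤ K) →
        (∀ i j : ℕ, i ≤ N → j ≤ N →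
          |(i : ℝ) - (j : ℝ)| / K - K ≤ dist (σ i) (σ j)) →
        ∀ i : ℕ, i ≤ N → Metric.infDist (σ i) (Set.range γ) ≤ M := by
  classical
  obtain ⟨L, hLdef⟩ : ∃ L : ℕ, L = ⌈2 * K * κ⌉₊ := ⟨_, rfl⟩
  have hLpos : 0 < L := hLdef ▸ Nat.ceil_pos.2 (by nlinarith)
  have hLge : 2 * K * κ ≤ (L : ℝ) := hLdef ▸ Nat.le_ceil _
  have hLR : (0:ℝ) < (L:ℝ) := by exact_mod_cast hLpos
  obtain ⟨R, hRdef⟩ : ∃ R : ℝ, R = ((L : ℝ) + 1) * K := ⟨_, rfl⟩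
  have hRpos : 0 < R := by rw [hRdef]; positivity
  obtain ⟨A, hAdef⟩ : ∃ A : ℝ, A = 10 * K + 10 * R + 10 * κ + 10 := ⟨_, rfl⟩
  have hApos : 0 < A := by rw [hAdef]; positivity
  obtain ⟨Dmax, hDdef⟩ : ∃ D : ℝ, D = 2 * K * (A + K) := ⟨_, rfl⟩
  have hDpos : 0 < Dmax := by rw [hDdef]; positivity
  obtain ⟨M, hMdef⟩ : ∃ M : ℝ, M = R + Dmax * K := ⟨_, rfl⟩
  have hMR : R ≤ M := by
    rw [hMdef]
    nlinarith [mul_nonneg hDpos.le (show (0:ℝ) ≤ K by linarith)]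
  refine ⟨M, lt_of_lt_of_le hRpos hMR, ?_⟩
  intro X _ γ Pr hγ hP N σ h0 hN hstep hlow i hiN
  obtain ⟨d, hddef⟩ : ∃ d : ℕ → ℝ, d = fun j => Metric.infDist (σ j) (Set.range γ) :=
    ⟨_, rfl⟩
  suffices hgoal : d i ≤ M by rw [hddef] at hgoal; exact hgoal
  have hPmem : ∀ x : X, Pr x ∈ Set.range γ := fun x => hP.1 ⟨x, rfl⟩
  have hd_le : ∀ j, d j ≤ dist (σ j) (Pr (σ j)) := by
    intro j; rw [hddef]; exact Metric.infDist_le_dist_of_mem (hPmem _)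
  have hclose : ∀ j, dist (σ j) (Pr (σ j)) ≤ d j + 1 + κ := by
    intro j; rw [hddef]; exact dist_proj_le hP _
  have hdnn : ∀ j, 0 ≤ d j := by intro j; rw [hddef]; exact Metric.infDist_nonneg
  have hd0 : d 0 = 0 := by rw [hddef]; exact Metric.infDist_zero_of_mem h0
  have hdN : d N = 0 := by rw [hddef]; exact Metric.infDist_zero_of_mem hN
  have hlip : ∀ j l : ℕ, d j ≤ d l + dist (σ j) (σ l) := by
    intro j l; rw [hddef]; exact Metric.infDist_le_infDist_add_dist
  rcases le_or_gt (d i) R with hdi | hdi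
  · exact le_trans hdi hMR
  -- choose a : last index ≤ i with d ≤ R
  obtain ⟨a, hadef⟩ : ∃ a : ℕ, a = Nat.findGreatest (fun j => d j ≤ R) i := ⟨_, rfl⟩
  have haP : d a ≤ R := by
    rw [hadef]
    exact Nat.findGreatest_spec (P := fun j => d j ≤ R) (Nat.zero_le i)
      (show d 0 ≤ R by rw [hd0]; exact hRpos.le)
  have ha_le : a ≤ i := hadef ▸ Nat.findGreatest_le i
  have ha_lt : a < i := by
    rcases lt_or_eq_of_le ha_le with h | h
    · exact h
    · exfalso; rw [h] at haP; linarith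
  have hmid1 : ∀ j, a < j → j ≤ i → R < d j := by
    intro j h1 h2
    rw [hadef] at h1
    have := Nat.findGreatest_is_greatest (P := fun j => d j ≤ R) h1 h2
    simpa using lt_of_not_ge this
  -- choose b : first index ≥ i with d ≤ R
  have hex : ∃ m, i + m ≤ N ∧ d (i + m) ≤ R := by
    refine ⟨N - i, by omega, ?_⟩
    rw [show i + (N - i) = N from by omega, hdN]
    exact hRpos.le
  obtain ⟨b, hbdef⟩ : ∃ b : ℕ, b = i + Nat.find hex := ⟨_, rfl⟩
  have hb_le : b ≤ N := by rw [hbdef]; exact (Nat.find_spec hex).1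
  have hbP : d b ≤ R := by rw [hbdef]; exact (Nat.find_spec hex).2
  have hi_lt_b : i < b := by
    rw [hbdef]
    rcases Nat.eq_zero_or_pos (Nat.find hex) with h | h
    · exfalso
      have h2 := (Nat.find_spec hex).2
      rw [h] at h2
      simp at h2
      linarith
    · omega
  have hmid2 : ∀ j, i ≤ j → j < b → R < d j := by
    intro j h1 h2
    rw [hbdef] at h2
    have hm := Nat.find_min hex (m := j - i) (by omega)
    push_neg at hm
    have := hm (by omega)
    rw [show i + (j - i) = j from by omega] at this
    linarith
  have hmid : ∀ j, a < j → j < b → R < d j := by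
    intro j h1 h2
    rcases le_or_gt j i with h | h
    · exact hmid1 j h1 h
    · exact hmid2 j h.le h2
  have hab2 : a + 2 ≤ b := by omega
  -- chunk lemma: projections of nearby deep points are κ-close
  have hchunk : ∀ j l, a < j → j ≤ l → l < b → l - j ≤ L →
      dist (Pr (σ j)) (Pr (σ l)) ≤ κ := by
    intro j l h1 h2 h3 h4
    by_contra hcon
    push_neg at hcon
    have hcontr := hP.2.1 (σ j) (σ l) hcon.le
    have hup : dist (σ j) (σ l) ≤ (L : ℝ) * K := by
      have hss := sum_steps σ N hstep j (l - j) (by omega)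
      rw [show j + (l - j) = l from by omega] at hss
      calc dist (σ j) (σ l) ≤ ((l - j : ℕ) : ℝ) * K := hss
        _ ≤ (L : ℝ) * K := by
            apply mul_le_mul_of_nonneg_right _ (by linarith)
            exact_mod_cast h4
    have hdj : R < d j := hmid j h1 (lt_of_le_of_lt h2 h3)
    have hdl : R < d l := hmid l (lt_of_lt_of_le h1 h2) h3
    have e1 := hd_le j
    have e2 : d l ≤ dist (Pr (σ l)) (σ l) := by
      rw [dist_comm]; exact hd_le l
    rw [hRdef] at hdj hdl
    nlinarith
  -- accumulation along the interval
  have hb1 : b - 1 + 1 = b := by omega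
  obtain ⟨q, hqdef⟩ : ∃ q : ℕ, q = (b - 1 - (a + 1)) / L := ⟨_, rfl⟩
  have t3 : dist (Pr (σ (a + 1))) (Pr (σ (b - 1))) ≤ κ * ((q : ℝ) + 1) := by
    rw [hqdef]
    exact accum_lemma (by linarith : (0:ℝ) ≤ κ) (fun j => Pr (σ j)) L a b hLpos
      hchunk (b - 1) (by omega) (by omega)
  -- distances
  obtain ⟨u, hudef⟩ : ∃ u : ℝ, u = ((b - a : ℕ) : ℝ) := ⟨_, rfl⟩
  have hunn : 0 ≤ u := by rw [hudef]; positivity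
  have hsum_ab : u / K - K ≤ dist (σ a) (σ b) := by
    have hl := hlow a b (le_trans ha_le hiN) hb_le
    have habs : |(a : ℝ) - (b : ℝ)| = u := by
      rw [hudef, abs_sub_comm, Nat.cast_sub (by omega : a ≤ b), abs_of_nonneg]
      have : (a : ℝ) ≤ (b : ℝ) := by exact_mod_cast (show a ≤ b from by omega)
      linarith
    rw [habs] at hl
    exact hl
  have t1 : dist (σ a) (σ (a + 1)) ≤ K := hstep a (by omega)
  have t5 : dist (σ (b - 1)) (σ b) ≤ K := by
    have h := hstep (b - 1) (by omega)
    rwa [hb1] at h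
  have hda1 : d (a + 1) ≤ R + K := by
    have h := hlip (a + 1) a
    rw [dist_comm] at h
    linarith
  have hdb1 : d (b - 1) ≤ R + K := by
    have h := hlip (b - 1) b
    linarith
  have t2 : dist (σ (a + 1)) (Pr (σ (a + 1))) ≤ R + K + 1 + κ := by
    have h := hclose (a + 1); linarith
  have t4 : dist (Pr (σ (b - 1))) (σ (b - 1)) ≤ R + K + 1 + κ := by
    have h := hclose (b - 1); rw [dist_comm]; linarith
  have hqu : (q : ℝ) ≤ u / (L : ℝ) := by
    rw [hqdef, hudef]
    calc ((((b - 1 - (a + 1)) / L : ℕ)) : ℝ) ≤ ((b - 1 - (a + 1) : ℕ) : ℝ) / (L : ℝ) :=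
      Nat.cast_div_le
      _ ≤ ((b - a : ℕ) : ℝ) / (L : ℝ) := by
          have hnum : ((b - 1 - (a + 1) : ℕ) : ℝ) ≤ ((b - a : ℕ) : ℝ) := by
            exact_mod_cast (show b - 1 - (a + 1) ≤ b - a from by omega)
          exact div_le_div_of_nonneg_right hnum hLR.le |>.trans_eq rfl
  have hchain : dist (σ a) (σ b) ≤ 2*K + 2*(R+K+1+κ) + κ*((q:ℝ)+1) := by
    have T1 := dist_triangle (σ a) (σ (a+1)) (σ b)
    have T2 := dist_triangle (σ (a+1)) (Pr (σ (a+1))) (σ b)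
    have T3 := dist_triangle (Pr (σ (a+1))) (Pr (σ (b-1))) (σ b)
    have T4 := dist_triangle (Pr (σ (b-1))) (σ (b-1)) (σ b)
    linarith
  have hmain : u / K - K ≤ 2*K + 2*(R+K+1+κ) + κ*((q:ℝ)+1) :=
    le_trans hsum_ab hchain
  have hκq : κ * ((q:ℝ)+1) ≤ u/(2*K) + κ := by
    have h1 : κ * (q:ℝ) ≤ κ * (u / (L:ℝ)) := mul_le_mul_of_nonneg_left hqu (by linarith)
    have h2 : κ * (u / (L:ℝ)) ≤ u / (2*K) := by
      rw [mul_div_assoc', div_le_div_iff₀ hLR (by positivity : (0:ℝ) < 2*K)]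
      calc κ * u * (2 * K) = u * (2 * K * κ) := by ring
        _ ≤ u * (L:ℝ) := mul_le_mul_of_nonneg_left hLge hunn
    linarith
  have hu2 : u/(2*K) ≤ A + K := by
    have heq : u / K = u/(2*K) + u/(2*K) := by
      field_simp
      ring
    rw [hAdef]
    linarith
  have huD : u ≤ Dmax := by
    rw [div_le_iff₀ (by positivity : (0:ℝ) < 2*K)] at hu2
    rw [hDdef]
    linarith
  have hia : dist (σ i) (σ a) ≤ ((i - a : ℕ):ℝ) * K := by
    have h := sum_steps σ N hstep a (i - a) (by omega)
    rw [show a + (i - a) = i from by omega] at h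
    rw [dist_comm]
    exact h
  have hlipi : d i ≤ d a + dist (σ i) (σ a) := hlip i a
  have hiau : ((i - a : ℕ):ℝ) ≤ u := by
    rw [hudef]
    exact_mod_cast (show i - a ≤ b - a from by omega)
  have hfin1 : ((i - a : ℕ):ℝ) * K ≤ u * K := mul_le_mul_of_nonneg_right hiau (by linarith)
  have hfin2 : u * K ≤ Dmax * K := mul_le_mul_of_nonneg_right huD (by linarith)
  rw [hMdef]
  linarith
end

section
/- For all real numbers κ ≥ 1, K ≥ 1 and c ≥ 1 there exists M > 0 with the following property. Let X be a metric space with distance d, and let dL : X × X → ℝ be a function satisfying, for all x, y, z ∈ X: dL(x, x) = 0, dL(x, y) ≥ 0, dL(x, z) ≤ dL(x, y) + dL(y, z), d(x, y) = dL(x, y) + dL(y, x), and d(x, y) ≤ c · dL(x, y). Let γ : ℝ → X be a κ-coarse geodesic and let Π : X → X be a map whose image is contained in γ(ℝ) and which satisfies: (i') for all x, y ∈ X with d(Π(x), Π(y)) ≥ κ one has dL(x, y) ≥ dL(x, Π(x)) + dL(Π(x), Π(y)) + dL(Π(y), y) − κ; (ii) for all x ∈ X and s ∈ ℝ, if d(x,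 γ(s)) ≤ infDist(x, γ(ℝ)) + 1 then d(γ(s), Π(x)) ≤ κ. Then for all real numbers a ≤ b, every continuous map σ : [a, b] → X with σ(a) ∈ γ(ℝ), σ(b) ∈ γ(ℝ) and |t − s|/K − K ≤ dL(σ(s), σ(t)) ≤ K|t − s| + K for all a ≤ s ≤ t ≤ b satisfies infDist(σ(s), γ(ℝ)) ≤ M for every s ∈ [a, b]. (This is the one-sided, asymmetric-distance version of the paper's Lemma 3.6, modeled on the one-sided Lipschitz metric on the thick part of Outer space and its symmetrization.) -/
/-- One-sided, asymmetric-distance version of Lemma 3.6: quasi-geodesics for the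
asymmetric distance `dL` with endpoints on a contracting coarse geodesic stay
uniformly close to it, with a bound depending only on `κ`, `K` and `c`. -/
theorem oneSided_quasiGeodesic_near_contracting_coarse_geodesic
    (κ K c : ℝ) (hκ : 1 ≤ κ) (hK : 1 ≤ K) (hc : 1 ≤ c) :
    ∃ M > 0, ∀ (X : Type) [MetricSpace X] (dL : X → X → ℝ),
      (∀ x : X, dL x x = 0) →
      (∀ x y : X, 0 ≤ dL x y) →
      (∀ x y z : X, dL x z ≤ dL x y + dL y z) →
      (∀ x y : X, dist x y = dL x y + dL y x) →
      (∀ x y : X, dist x y ≤ c * dL x y) →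
      ∀ (γ : ℝ → X) (Pr : X → X),
        IsCoarseGeodesic κ γ →
        Set.range Pr ⊆ Set.range γ →
        (∀ x y : X, κ ≤ dist (Pr x) (Pr y) →
          dL x (Pr x) + dL (Pr x) (Pr y) + dL (Pr y) y - κ ≤ dL x y) →
        (∀ (x : X) (s : ℝ), dist x (γ s) ≤ Metric.infDist x (Set.range γ) + 1 →
          dist (γ s) (Pr x) ≤ κ) →
        ∀ a b : ℝ, a ≤ b → ∀ σ : ℝ → X,
          ContinuousOn σ (Set.Icc a b) →
          (∀ s t : ℝ, a ≤ s → s ≤ t → t ≤ b →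
            |t - s| / K - K ≤ dL (σ s) (σ t) ∧ dL (σ s) (σ t) ≤ K * |t - s| + K) →
          σ a ∈ Set.range γ → σ b ∈ Set.range γ →
          ∀ s ∈ Set.Icc a b, Metric.infDist (σ s) (Set.range γ) ≤ M := by
  have hKpos : (0:ℝ) < K := by linarith
  have hκpos : (0:ℝ) < κ := by linarith
  have hcpos : (0:ℝ) < c := by linarith
  set δ : ℝ := 2 * K * κ with hδdef
  have hδpos : 0 < δ := by positivity
  set R₀ : ℝ := c * (K * δ + K + κ + 1) with hR₀def
  have hR₀pos : 0 < R₀ := by positivity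
  set T : ℝ := 2 * K * (K + 2 * (R₀ + 1 + κ) + κ) with hTdef
  have hTpos : 0 < T := by positivity
  refine ⟨R₀ + c * (K * T + K) + 1, by positivity, ?_⟩
  intro X _ dL hdL0 hdLnn hdLtri hdLsym hdLc γ Pr hγ hPrRange hContr hProj
    a b hab σ hσ hσQG hσa hσb s hs
  have hγne : (Set.range γ).Nonempty := ⟨γ 0, 0, rfl⟩
  set f : ℝ → ℝ := fun t => Metric.infDist (σ t) (Set.range γ) with hfdef
  have hfc : ContinuousOn f (Set.Icc a b) :=
    (Metric.continuous_infDist_pt (Set.range γ)).comp_continuousOn hσ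
  have hfa : f a = 0 := Metric.infDist_zero_of_mem hσa
  have hfb : f b = 0 := Metric.infDist_zero_of_mem hσb
  have has : a ≤ s := hs.1
  have hsb : s ≤ b := hs.2
  -- projection proximity
  have hPrClose : ∀ x : X, dist x (Pr x) ≤ Metric.infDist x (Set.range γ) + 1 + κ := by
    intro x
    have hlt : Metric.infDist x (Set.range γ) < Metric.infDist x (Set.range γ) + 1 :=
      lt_add_one _
    obtain ⟨y, ⟨s', rfl⟩, hy⟩ := (Metric.infDist_lt_iff hγne).1 hlt
    have h1 : dist (γ s') (Pr x) ≤ κ := hProj x s' hy.le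
    calc dist x (Pr x) ≤ dist x (γ s') + dist (γ s') (Pr x) := dist_triangle _ _ _
      _ ≤ Metric.infDist x (Set.range γ) + 1 + κ := by linarith
  rcases le_or_gt (f s) R₀ with hcase | hcase
  · have h0 : (0:ℝ) ≤ c * (K * T + K) := by positivity
    linarith
  -- hard case: f s > R₀
  · set A : Set ℝ := Set.Icc a s ∩ f ⁻¹' {R₀} with hAdef
    set B : Set ℝ := Set.Icc s b ∩ f ⁻¹' {R₀} with hBdef
    have hfcs : ContinuousOn f (Set.Icc a s) :=
      hfc.mono (Set.Icc_subset_Icc_right hsb)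
    have hfsb : ContinuousOn f (Set.Icc s b) :=
      hfc.mono (Set.Icc_subset_Icc_left has)
    have hAne : A.Nonempty := by
      have : R₀ ∈ Set.Icc (f a) (f s) := ⟨by rw [hfa]; exact hR₀pos.le, hcase.le⟩
      obtain ⟨t, ht, hft⟩ := intermediate_value_Icc has hfcs this
      exact ⟨t, ht, hft⟩
    have hBne : B.Nonempty := by
      have : R₀ ∈ Set.Icc (f b) (f s) := ⟨by rw [hfb]; exact hR₀pos.le, hcase.le⟩
      obtain ⟨t, ht, hft⟩ := intermediate_value_Icc' hsb hfsb this
      exact ⟨t, ht, hft⟩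
    have hAclosed : IsClosed A :=
      hfcs.preimage_isClosed_of_isClosed isClosed_Icc isClosed_singleton
    have hBclosed : IsClosed B :=
      hfsb.preimage_isClosed_of_isClosed isClosed_Icc isClosed_singleton
    have hAcompact : IsCompact A :=
      (isCompact_Icc (a := a) (b := s)).of_isClosed_subset hAclosed Set.inter_subset_left
    have hBcompact : IsCompact B :=
      (isCompact_Icc (a := s) (b := b)).of_isClosed_subset hBclosed Set.inter_subset_left
    set u : ℝ := sSup A with hudef
    set v : ℝ := sInf B with hvdef
    have huA : u ∈ A := hAcompact.sSup_mem hAne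
    have hvB : v ∈ B := hBcompact.sInf_mem hBne
    have hau : a ≤ u := huA.1.1
    have hus : u ≤ s := huA.1.2
    have hsv : s ≤ v := hvB.1.1
    have hvb : v ≤ b := hvB.1.2
    have huv : u ≤ v := hus.trans hsv
    have hfu : f u = R₀ := huA.2
    have hfv : f v = R₀ := hvB.2
    -- everywhere on [u,v] we have f ≥ R₀
    have hall : ∀ t ∈ Set.Icc u v, R₀ ≤ f t := by
      intro t ⟨hut, htv⟩
      rcases le_total t s with hts | hst
      · rcases eq_or_lt_of_le hut with h | h
        · rw [← h, hfu]
        · by_contra hlt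
          push_neg at hlt
          have : R₀ ∈ Set.Icc (f t) (f s) := ⟨hlt.le, hcase.le⟩
          obtain ⟨t', ht', hft'⟩ :=
            intermediate_value_Icc hts (hfcs.mono (Set.Icc_subset_Icc_left (hau.trans hut))) this
          have ht'A : t' ∈ A := ⟨⟨hau.trans (hut.trans ht'.1), ht'.2⟩, hft'⟩
          have : t' ≤ u := le_csSup hAcompact.bddAbove ht'A
          linarith [ht'.1]
      · rcases eq_or_lt_of_le htv with h | h
        · rw [h, hfv]
        · by_contra hlt
          push_neg at hlt
          have : R₀ ∈ Set.Icc (f t) (f s) := ⟨hlt.le, hcase.le⟩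
          obtain ⟨t', ht', hft'⟩ :=
            intermediate_value_Icc' hst (hfsb.mono (Set.Icc_subset_Icc_right (htv.trans hvb))) this
          have ht'B : t' ∈ B := ⟨⟨ht'.1, ht'.2.trans (htv.trans hvb)⟩, hft'⟩
          have : v ≤ t' := csInf_le hBcompact.bddBelow ht'B
          linarith [ht'.2]
    -- projection moves at most κ on each small step
    have hstep : ∀ p q : ℝ, u ≤ p → p ≤ q → q ≤ v → q - p ≤ δ →
        dist (Pr (σ p)) (Pr (σ q)) ≤ κ := by
      intro p q hup hpq hqv hqp
      by_contra h
      push_neg at h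
      have h2 := hContr (σ p) (σ q) h.le
      have hfp : R₀ ≤ f p := hall p ⟨hup, hpq.trans hqv⟩
      have hmem : Pr (σ p) ∈ Set.range γ := hPrRange ⟨σ p, rfl⟩
      have h3 : f p ≤ dist (σ p) (Pr (σ p)) := Metric.infDist_le_dist_of_mem hmem
      have h4 : dist (σ p) (Pr (σ p)) ≤ c * dL (σ p) (Pr (σ p)) := hdLc _ _
      have h5 : c * (K * δ + K + κ + 1) ≤ c * dL (σ p) (Pr (σ p)) := by
        rw [← hR₀def]; linarith
      have h6 : K * δ + K + κ + 1 ≤ dL (σ p) (Pr (σ p)) :=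
        le_of_mul_le_mul_left h5 hcpos
      have h7 := (hσQG p q (hau.trans hup) hpq (hqv.trans hvb)).2
      have h8 : |q - p| = q - p := abs_of_nonneg (by linarith)
      rw [h8] at h7
      have h9 : K * (q - p) ≤ K * δ := mul_le_mul_of_nonneg_left hqp hKpos.le
      have h10 := hdLnn (Pr (σ p)) (Pr (σ q))
      have h11 := hdLnn (Pr (σ q)) (σ q)
      linarith
    -- chain: projection of σ moves at most κ·i after i steps
    have hchain : ∀ i : ℕ, dist (Pr (σ u)) (Pr (σ (min (u + i * δ) v))) ≤ κ * i := by
      intro i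
      induction i with
      | zero => simp [min_eq_left huv]
      | succ i ih =>
        set p : ℝ := min (u + i * δ) v with hpdef
        set q : ℝ := min (u + (i + 1 : ℕ) * δ) v with hqdef
        have hiδ : (0:ℝ) ≤ i * δ := by positivity
        have hup : u ≤ p := le_min (by linarith) huv
        have hpq : p ≤ q := by
          apply min_le_min _ le_rfl
          push_cast
          nlinarith
        have hqv : q ≤ v := min_le_right _ _
        have hqp : q - p ≤ δ := by
          rcases le_total (u + i * δ) v with h | h
          · have hp' : p = u + i * δ := min_eq_left h
            have hq' : q ≤ u + (i + 1 : ℕ) * δ := min_le_left _ _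
            push_cast at hq'
            rw [hp']
            linarith
          · have hp' : p = v := min_eq_right h
            have hq' : q = v := min_eq_right (by push_cast; nlinarith)
            rw [hp', hq']
            linarith
        have hstp := hstep p q hup hpq hqv hqp
        calc dist (Pr (σ u)) (Pr (σ q))
            ≤ dist (Pr (σ u)) (Pr (σ p)) + dist (Pr (σ p)) (Pr (σ q)) := dist_triangle _ _ _
          _ ≤ κ * i + κ := add_le_add ih hstp
          _ = κ * (i + 1 : ℕ) := by push_cast; ring
    set n : ℕ := ⌈(v - u) / δ⌉₊ with hndef
    have hvu0 : (0:ℝ) ≤ v - u := by linarith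
    have hdiv0 : (0:ℝ) ≤ (v - u) / δ := div_nonneg hvu0 hδpos.le
    have hnδ : v - u ≤ n * δ := by
      have h1 : (v - u) / δ ≤ (n : ℝ) := Nat.le_ceil _
      have h2 : (v - u) / δ * δ ≤ (n : ℝ) * δ := mul_le_mul_of_nonneg_right h1 hδpos.le
      rwa [div_mul_cancel₀ _ hδpos.ne'] at h2
    have hminv : min (u + n * δ) v = v := min_eq_right (by linarith)
    have hPruv : dist (Pr (σ u)) (Pr (σ v)) ≤ κ * n := by
      have := hchain n
      rwa [hminv] at this
    have hn_le : (n : ℝ) ≤ (v - u) / δ + 1 := (Nat.ceil_lt_add_one hdiv0).le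
    -- endpoints close to their projections
    have hu1 : dist (σ u) (Pr (σ u)) ≤ R₀ + 1 + κ := by
      have := hPrClose (σ u)
      rw [show Metric.infDist (σ u) (Set.range γ) = f u from rfl, hfu] at this
      exact this
    have hv1 : dist (σ v) (Pr (σ v)) ≤ R₀ + 1 + κ := by
      have := hPrClose (σ v)
      rw [show Metric.infDist (σ v) (Set.range γ) = f v from rfl, hfv] at this
      exact this
    have hduv : dist (σ u) (σ v) ≤ 2 * (R₀ + 1 + κ) + κ * n := by
      have h4 := dist_triangle4 (σ u) (Pr (σ u)) (Pr (σ v)) (σ v)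
      have hvc : dist (Pr (σ v)) (σ v) = dist (σ v) (Pr (σ v)) := dist_comm _ _
      linarith
    -- quasi-geodesic lower bound
    have hlow := (hσQG u v hau huv hvb).1
    have habs : |v - u| = v - u := abs_of_nonneg hvu0
    rw [habs] at hlow
    have hdLle : dL (σ u) (σ v) ≤ dist (σ u) (σ v) := by
      have h1 := hdLsym (σ u) (σ v)
      have h2 := hdLnn (σ v) (σ u)
      linarith
    -- combine: v - u ≤ T
    have hwT : v - u ≤ T := by
      have h1 : (v - u) / K - K ≤ 2 * (R₀ + 1 + κ) + κ * n := by linarith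
      have h2 : κ * (n : ℝ) ≤ κ * ((v - u) / δ + 1) :=
        mul_le_mul_of_nonneg_left hn_le hκpos.le
      have h3 : κ * ((v - u) / δ) = (v - u) / (2 * K) := by
        rw [hδdef]
        field_simp
      have h4 : (v - u) / K - (v - u) / (2 * K) = (v - u) / (2 * K) := by
        field_simp
        ring
      have h5 : (v - u) / (2 * K) ≤ K + 2 * (R₀ + 1 + κ) + κ := by
        have : κ * (n : ℝ) ≤ (v - u) / (2 * K) + κ := by
          rw [mul_add] at h2
          rw [h3] at h2
          linarith
        linarith
      have h6 : 2 * K * ((v - u) / (2 * K)) ≤ 2 * K * (K + 2 * (R₀ + 1 + κ) + κ) :=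
        mul_le_mul_of_nonneg_left h5 (by positivity)
      rw [mul_div_cancel₀ _ (by positivity : (2 * K : ℝ) ≠ 0)] at h6
      rw [hTdef]
      linarith
    -- conclude
    have hfsb' : f s ≤ f u + dist (σ s) (σ u) := Metric.infDist_le_infDist_add_dist
    rw [hfu, dist_comm] at hfsb'
    have hds : dist (σ u) (σ s) ≤ c * (K * (s - u) + K) := by
      have hq := (hσQG u s hau hus hsb).2
      have habs' : |s - u| = s - u := abs_of_nonneg (by linarith)
      rw [habs'] at hq
      have h1 : dist (σ u) (σ s) ≤ c * dL (σ u) (σ s) := hdLc _ _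
      have h2 : c * dL (σ u) (σ s) ≤ c * (K * (s - u) + K) :=
        mul_le_mul_of_nonneg_left hq hcpos.le
      linarith
    have hsu : s - u ≤ T := by linarith
    have hfin : c * (K * (s - u) + K) ≤ c * (K * T + K) := by
      have h1 : K * (s - u) ≤ K * T := mul_le_mul_of_nonneg_left hsu hKpos.le
      have h2 : K * (s - u) + K ≤ K * T + K := by linarith
      exact mul_le_mul_of_nonneg_left h2 hcpos.le
    linarith
end

section
/- For all real numbers κ ≥ 1 and K ≥ 1 there exists D > 0 with the following property. Let X be any metric space, let γ : ℝ → X be a κ-coarse geodesic, and let Π : X → X be a κ-contracting projection onto γ. Let a ≤ b and let σ : [a, b] → X be a continuous K-quasi-geodesic such that infDist(σ(s), γ(ℝ)) ≥ 2κK² for all s ∈ [a, b], while infDist(σ(a), γ(ℝ)) ≤ 2κK² + 1 and infDist(σ(b), γ(ℝ)) ≤ 2κK² + 1. Then b − a ≤ D and d(σ(a), σ(b)) ≤ D. (This is the excursion bound established in the proof of the paper's Lemma 3.6: a quasi-geodesic cannot make a long excursion away from a contracting coarse geodesic.) -/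
/-- Excursion bound: a quasi-geodesic cannot make a long excursion away from a
contracting coarse geodesic. -/
theorem excursion_bound_contracting_coarse_geodesic
    (κ K : ℝ) (hκ : 1 ≤ κ) (hK : 1 ≤ K) :
    ∃ D > 0, ∀ (X : Type) [MetricSpace X] (γ : ℝ → X) (Pr : X → X),
      IsCoarseGeodesic κ γ →
      IsContractingProjection κ γ Pr →
      ∀ a b : ℝ, a ≤ b → ∀ σ : ℝ → X,
        ContinuousOn σ (Set.Icc a b) →
        IsQuasiGeodesicOn K a b σ →
        (∀ s ∈ Set.Icc a b, 2 * κ * K ^ 2 ≤ Metric.infDist (σ s) (Set.range γ)) →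
        Metric.infDist (σ a) (Set.range γ) ≤ 2 * κ * K ^ 2 + 1 →
        Metric.infDist (σ b) (Set.range γ) ≤ 2 * κ * K ^ 2 + 1 →
        b - a ≤ D ∧ dist (σ a) (σ b) ≤ D := by
  have hκ0 : (0:ℝ) < κ := by linarith
  have hK0 : (0:ℝ) < K := by linarith
  set D₀ : ℝ := 2 * K * (K + 4 * κ * K ^ 2 + 3 * κ + 4) with hD₀
  have hD₀pos : 0 < D₀ := by positivity
  refine ⟨K * D₀ + K, by positivity, ?_⟩
  intro X _ γ Pr hγ hPr a b hab σ hcont hqg hfar ha hb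
  obtain ⟨hrange, hcontr, hnear⟩ := hPr
  have hne : (Set.range γ).Nonempty := ⟨γ 0, ⟨0, rfl⟩⟩
  -- endpoint bound
  have hend : ∀ x : X, Metric.infDist x (Set.range γ) ≤ 2 * κ * K ^ 2 + 1 →
      dist x (Pr x) ≤ 2 * κ * K ^ 2 + 2 + κ := by
    intro x hx
    obtain ⟨y, hy, hdy⟩ := (Metric.infDist_lt_iff hne).mp
      (by linarith : Metric.infDist x (Set.range γ) < Metric.infDist x (Set.range γ) + 1)
    obtain ⟨s, rfl⟩ := hy
    have h2 := hnear x s (le_of_lt hdy)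
    calc dist x (Pr x) ≤ dist x (γ s) + dist (γ s) (Pr x) := dist_triangle _ _ _
      _ ≤ (Metric.infDist x (Set.range γ) + 1) + κ := by linarith
      _ ≤ 2 * κ * K ^ 2 + 2 + κ := by linarith
  -- distance to own projection lower bound
  have hlow : ∀ s ∈ Set.Icc a b, 2 * κ * K ^ 2 ≤ dist (σ s) (Pr (σ s)) := by
    intro s hs
    have h1 : Metric.infDist (σ s) (Set.range γ) ≤ dist (σ s) (Pr (σ s)) :=
      Metric.infDist_le_dist_of_mem (hrange (Set.mem_range_self _))
    linarith [hfar s hs]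
  -- step bound for projections
  have hstep : ∀ s ∈ Set.Icc a b, ∀ t ∈ Set.Icc a b, |s - t| ≤ 2 * κ * K →
      dist (Pr (σ s)) (Pr (σ t)) ≤ κ := by
    intro s hs t ht hst
    by_contra h
    push_neg at h
    have h1 := hcontr (σ s) (σ t) (le_of_lt h)
    have h2 : dist (σ s) (σ t) ≤ K * (2 * κ * K) + K := by
      have h3 := (hqg s hs t ht).2
      nlinarith [abs_nonneg (s - t)]
    have hc : dist (Pr (σ t)) (σ t) = dist (σ t) (Pr (σ t)) := dist_comm _ _
    have hkk : K ≤ κ * K ^ 2 := by nlinarith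
    linarith [hlow s hs, hlow t ht]
  -- chain of sample points
  set δ : ℝ := 2 * κ * K with hδdef
  have hδ0 : 0 < δ := by positivity
  set u : ℕ → ℝ := fun n => min (a + n * δ) b with hu
  have hu0 : u 0 = a := by simp [hu, hab]
  have humem : ∀ n : ℕ, u n ∈ Set.Icc a b := by
    intro n
    refine ⟨le_min ?_ hab, min_le_right _ _⟩
    nlinarith [Nat.cast_nonneg (α := ℝ) n]
  have hchain : ∀ n : ℕ, dist (Pr (σ a)) (Pr (σ (u n))) ≤ n * κ := by
    intro n
    induction n with
    | zero => simp [hu0]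
    | succ n ih =>
      have hmono : u n ≤ u (n + 1) := by
        apply min_le_min _ le_rfl
        push_cast
        nlinarith
      have hub : u (n + 1) ≤ u n + δ := by
        have : u (n + 1) ≤ min (a + n * δ + δ) (b + δ) := by
          apply min_le_min _ (by linarith)
          push_cast; nlinarith
        calc u (n + 1) ≤ min (a + n * δ + δ) (b + δ) := this
          _ = min (a + n * δ) b + δ := by rw [← min_add_add_right]
          _ = u n + δ := rfl
      have hd : |u n - u (n + 1)| ≤ δ := by
        rw [abs_sub_comm, abs_of_nonneg (by linarith)]
        linarith
      calc dist (Pr (σ a)) (Pr (σ (u (n + 1))))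
          ≤ dist (Pr (σ a)) (Pr (σ (u n))) + dist (Pr (σ (u n))) (Pr (σ (u (n + 1)))) :=
            dist_triangle _ _ _
        _ ≤ n * κ + κ := add_le_add ih (hstep _ (humem n) _ (humem (n + 1)) hd)
        _ = (n + 1 : ℕ) * κ := by push_cast; ring
  -- choose n so that u n = b
  set n : ℕ := ⌈(b - a) / δ⌉₊ with hn
  have hnb : b ≤ a + n * δ := by
    have h1 : (b - a) / δ ≤ (n : ℝ) := Nat.le_ceil _
    have h2 : (b - a) ≤ n * δ := by
      rw [div_le_iff₀ hδ0] at h1; linarith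
    linarith
  have hun : u n = b := min_eq_right hnb
  have hnle : (n : ℝ) ≤ (b - a) / δ + 1 := by
    have h0 : 0 ≤ (b - a) / δ := div_nonneg (by linarith) (le_of_lt hδ0)
    exact le_of_lt (Nat.ceil_lt_add_one h0)
  -- projection distance bound
  have hproj : dist (Pr (σ a)) (Pr (σ b)) ≤ ((b - a) / δ + 1) * κ := by
    have := hchain n
    rw [hun] at this
    calc dist (Pr (σ a)) (Pr (σ b)) ≤ n * κ := this
      _ ≤ ((b - a) / δ + 1) * κ := by nlinarith
  -- combine
  have hamem : a ∈ Set.Icc a b := ⟨le_rfl, hab⟩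
  have hbmem : b ∈ Set.Icc a b := ⟨hab, le_rfl⟩
  have hqlow : (b - a) / K - K ≤ dist (σ a) (σ b) := by
    have h1 := (hqg a hamem b hbmem).1
    rwa [abs_sub_comm, abs_of_nonneg (by linarith)] at h1
  have hqup : dist (σ a) (σ b) ≤ K * (b - a) + K := by
    have h1 := (hqg a hamem b hbmem).2
    rwa [abs_sub_comm, abs_of_nonneg (by linarith)] at h1
  have hup : dist (σ a) (σ b) ≤
      (2 * κ * K ^ 2 + 2 + κ) + ((b - a) / δ + 1) * κ + (2 * κ * K ^ 2 + 2 + κ) := by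
    have hA := hend (σ a) ha
    have hB := hend (σ b) hb
    calc dist (σ a) (σ b)
        ≤ dist (σ a) (Pr (σ a)) + dist (Pr (σ a)) (Pr (σ b)) + dist (Pr (σ b)) (σ b) :=
          dist_triangle4 _ _ _ _
      _ ≤ (2 * κ * K ^ 2 + 2 + κ) + ((b - a) / δ + 1) * κ + (2 * κ * K ^ 2 + 2 + κ) := by
          rw [dist_comm (Pr (σ b)) (σ b)]
          exact add_le_add (add_le_add hA hproj) hB
  -- arithmetic: rewrite the two divisions as multiples of (b-a)/(2K)
  set M : ℝ := (b - a) / (2 * K) with hM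
  have hM0 : 0 ≤ M := div_nonneg (by linarith) (by linarith)
  have e1 : (b - a) / δ * κ = M := by
    rw [hδdef, hM]
    field_simp
  have e2 : (b - a) / K = 2 * M := by
    rw [hM]; field_simp
  have hMle : M ≤ K + 4 * κ * K ^ 2 + 3 * κ + 4 := by
    have := hup
    rw [add_mul, e1, one_mul] at this
    rw [e2] at hqlow
    linarith
  have hba : b - a ≤ D₀ := by
    have h3 : b - a = 2 * K * M := by
      rw [hM]; field_simp
    rw [h3, hD₀]
    nlinarith [hMle, hM0, hK0]
  have h5 : D₀ ≤ K * D₀ := le_mul_of_one_le_left hD₀pos.le hK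
  have h6 : K * (b - a) ≤ K * D₀ := mul_le_mul_of_nonneg_left hba hK0.le
  exact ⟨by linarith, by linarith⟩
end
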